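/- If for positive integers k and r a (k,r)-critical digraph exists, then r ≥ 2k+1, i.e., r - 1 ≥ 2k. -/

import Mathlib

/-- A nonempty list of pairwise distinct vertices forms a directed cycle:
consecutive vertices are adjacent and the last vertex is adjacent to the first.
Lists of length 1 are loops, lists of length 2 are bidirectional edges. -/
def IsCycle {V : Type} (Adj : V → V → Prop) (c : List V) : Prop :=
  c ≠ [] ∧ c.Nodup ∧ c.Chain' Adj ∧ ∀ x ∈ c.getLast?, ∀ y ∈ c.head?, Adj x y

/-- The digraph `Adj` contains `k` pairwise vertex-disjoint directed cycles. -/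
def HasDisjointCycles {V : Type} (Adj : V → V → Prop) (k : ℕ) : Prop :=
  ∃ c : Fin k → List V, (∀ i, IsCycle Adj (c i)) ∧
    Pairwise fun i j => ∀ x, x ∈ c i → x ∉ c j

/-- A digraph is `r`-out if every vertex has out-degree at least `r`. -/
def IsROut {V : Type} (Adj : V → V → Prop) (r : ℕ) : Prop :=
  ∀ v, r ≤ {u | Adj v u}.ncard

/-- A digraph `Adj` on a finite nonempty vertex type `V` is `(k,r)`-critical if:
(1) it is `r`-out; (2) it does not contain `k+1` disjoint cycles;
(3) it has the smallest number of vertices subject to (1),(2);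
(4) the smallest number of edges subject to (1),(2),(3); and
(5) every `(r-2)`-out digraph contains `k` disjoint cycles. -/
def IsCritical (k r : ℕ) {V : Type} [Finite V] [Nonempty V] (Adj : V → V → Prop) : Prop :=
  IsROut Adj r ∧
  ¬ HasDisjointCycles Adj (k + 1) ∧
  (∀ (W : Type) [Finite W] [Nonempty W] (B : W → W → Prop),
    IsROut B r → ¬ HasDisjointCycles B (k + 1) → Nat.card V ≤ Nat.card W) ∧
  (∀ (W : Type) [Finite W] [Nonempty W] (B : W → W → Prop),
    IsROut B r → ¬ HasDisjointCycles B (k + 1) → Nat.card W = Nat.card V →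
      {p : V × V | Adj p.1 p.2}.ncard ≤ {p : W × W | B p.1 p.2}.ncard) ∧
  (∀ (W : Type) [Finite W] [Nonempty W] (B : W → W → Prop),
    IsROut B (r - 2) → HasDisjointCycles B k)

/-! If `r ≤ 2k`, the complete loopless digraph on `2k - 1` vertices is `(r - 2)`-out, so by
criticality it contains `k` disjoint cycles. Without loops every cycle has at least two vertices,
so these cycles need `2k` vertices, which is too many. -/

theorem IsROut.mono {V : Type} {Adj : V → V → Prop} {r s : ℕ} (h : IsROut Adj r) (hsr : s ≤ r) :
    IsROut Adj s :=
  fun v => hsr.trans (h v)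

theorem isROut_ne (V : Type) [Finite V] : IsROut (fun x y : V => x ≠ y) (Nat.card V - 1) := by
  intro v
  have hout : {u | v ≠ u} = {v}ᶜ := by
    ext u
    simp [eq_comm]
  rw [hout, Set.ncard_compl, Set.ncard_singleton]

theorem IsCycle.two_le_length {V : Type} {Adj : V → V → Prop} (hirr : ∀ x, ¬ Adj x x)
    {c : List V} (hc : IsCycle Adj c) : 2 ≤ c.length := by
  obtain ⟨hne, -, -, hclose⟩ := hc
  by_contra! hlen
  obtain ⟨a, rfl⟩ : ∃ a, c = [a] :=
    List.length_eq_one_iff.mp (by have := List.length_pos_iff.mpr hne; omega)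
  exact hirr a (hclose a rfl a rfl)

theorem HasDisjointCycles.two_mul_le_card {V : Type} [Finite V] {Adj : V → V → Prop}
    (hirr : ∀ x, ¬ Adj x x) {k : ℕ} (h : HasDisjointCycles Adj k) : 2 * k ≤ Nat.card V := by
  obtain ⟨c, hcyc, hdisj⟩ := h
  have hnodup : (List.ofFn c).flatten.Nodup := by
    refine List.nodup_flatten.mpr ⟨?_, List.pairwise_ofFn.mpr fun i j hij => ?_⟩
    · intro l hl
      obtain ⟨i, rfl⟩ := List.mem_ofFn.mp hl
      exact (hcyc i).2.1
    · exact fun x hx => hdisj hij.ne x hx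
  calc 2 * k = ∑ _i : Fin k, 2 := by simp [mul_comm]
    _ ≤ ∑ i, (c i).length := Finset.sum_le_sum fun i _ => (hcyc i).two_le_length hirr
    _ = (List.ofFn c).flatten.length := by simp [List.length_flatten, List.sum_ofFn]
    _ ≤ Nat.card V := hnodup.length_le_natCard

theorem critical_r_ge_general (k r : ℕ) (hk : 0 < k)
    (V : Type) [Finite V] [Nonempty V] (Adj : V → V → Prop)
    (hc : IsCritical k r Adj) :
    2 * k + 1 ≤ r := by
  by_contra! hr
  have : Nonempty (Fin (2 * k - 1)) := Fin.pos_iff_nonempty.mp (by omega)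
  have hout : IsROut (fun x y : Fin (2 * k - 1) => x ≠ y) (r - 2) :=
    (isROut_ne _).mono (by rw [Nat.card_fin]; omega)
  have hcard := (hc.2.2.2.2 _ _ hout).two_mul_le_card fun _ hx => hx rfl
  rw [Nat.card_fin] at hcard
  omega

/-- If a `(k,r)`-critical digraph exists then `r - 1 ≥ 2k`, i.e. `r ≥ 2k + 1`. -/
theorem critical_r_ge (k r : ℕ) (hk : 0 < k) (hr : 0 < r)
    (V : Type) [Finite V] [Nonempty V] (Adj : V → V → Prop)
    (hc : IsCritical k r Adj) :
    2 * k + 1 ≤ r :=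
  critical_r_ge_general k r hk V Adj hc
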